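/- Let A ∈ sl(2,C) and let g = f^{1/2}π_L + f^{-1/2}π_{L⊥} be an unnormalized simple factor, where f has a simple pole at λ₀ and L is an eigenline of the conjugate transpose of A(λ₀) — equivalently, L⊥ is an eigenline of A(λ₀). Then gAg^{-1} = π_L A π_L + f·π_L A π_{L⊥} + f^{-1}·π_{L⊥} A π_L + π_{L⊥} A π_{L⊥}, and this expression is holomorphic at λ₀ (the pole of f is cancelled because π_L A(λ₀) π_{L⊥} = 0). -/

import Mathlib

/-!
Conjugating by `f^{1/2} π_L + f^{-1/2} π_{L⊥}` multiplies the block `π_L A π_{L⊥}` by `f` and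
`π_{L⊥} A π_L` by `f⁻¹`. Writing `f = e / (λ - λ₀)`, the second is harmless since
`f⁻¹ = (λ - λ₀) / e` is holomorphic, and the first is `e` times the difference quotient of
`π_L A π_{L⊥}` at `λ₀`, which is holomorphic because `π_L A(λ₀) π_{L⊥} = 0`: taking adjoints,
`L⊥` being `A(λ₀)`-invariant makes `π_L A(λ₀)` a multiple of `π_L`.
-/

open Matrix Filter Topology

/-- In the paper's notation `s = f^{1/2}` and `P = π_L`, so that `1 - P = π_{L⊥}`. -/
def simpleFactor {K R : Type*} [Field K] [Ring R] [Algebra K R] (s : K) (P : R) : R :=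
  s • P + s⁻¹ • (1 - P)

section SimpleFactor

variable {K R : Type*} [Field K] [Ring R] [Algebra K R]

lemma simpleFactor_mul_simpleFactor_inv {s : K} (hs : s ≠ 0) {P : R} (hP : IsIdempotentElem P) :
    simpleFactor s P * simpleFactor s⁻¹ P = 1 := by
  simp only [simpleFactor, inv_inv, add_mul, mul_add, smul_mul_smul, hP.eq, hP.one_sub.eq,
    hP.mul_one_sub_self, hP.one_sub_mul_self, smul_zero, add_zero, zero_add,
    mul_inv_cancel₀ hs, inv_mul_cancel₀ hs, one_smul, add_sub_cancel]

lemma simpleFactor_mul_mul_simpleFactor_inv {s : K} (hs : s ≠ 0) (P A : R) :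
    simpleFactor s P * A * simpleFactor s⁻¹ P =
      P * A * P + (s ^ 2) • (P * A * (1 - P)) + (s ^ 2)⁻¹ • ((1 - P) * A * P) +
        (1 - P) * A * (1 - P) := by
  simp only [simpleFactor, inv_inv, add_mul, mul_add, smul_mul_assoc, mul_smul_comm, smul_add,
    smul_smul, mul_inv_cancel₀ hs, inv_mul_cancel₀ hs, one_smul, sq, mul_inv]
  abel

end SimpleFactor

section RemovableSingularity

variable {𝕜 : Type*} [NontriviallyNormedField 𝕜] {x : 𝕜}

lemma AnalyticAt.dslope {E : Type*} [NormedAddCommGroup E] [NormedSpace 𝕜 E] {C : 𝕜 → E}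
    (h : AnalyticAt 𝕜 C x) : AnalyticAt 𝕜 (dslope C x) x := by
  obtain ⟨p, hp⟩ := h
  exact ⟨p.fslope, hp.has_fpower_series_dslope_fslope⟩

variable {e f : 𝕜 → 𝕜}

lemma mul_eventuallyEq_mul_dslope_of_eventuallyEq_div
    (hf : ∀ᶠ z in 𝓝[≠] x, f z = e z / (z - x)) {b : 𝕜 → 𝕜} (hb : b x = 0) :
    (fun z => f z * b z) =ᶠ[𝓝[≠] x] fun z => e z * dslope b x z := by
  filter_upwards [hf, self_mem_nhdsWithin] with z hfz hz
  rw [hfz, dslope_of_ne _ hz, slope_def_field, hb, sub_zero]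
  field_simp [sub_ne_zero.mpr hz]

lemma inv_eventuallyEq_div_of_eventuallyEq_div (hf : ∀ᶠ z in 𝓝[≠] x, f z = e z / (z - x)) :
    (fun z => (f z)⁻¹) =ᶠ[𝓝[≠] x] fun z => (z - x) / e z := by
  filter_upwards [hf] with z hfz
  rw [hfz, inv_div]

lemma exists_analyticAt_eventuallyEq_of_simplePole {a b c d : 𝕜 → 𝕜}
    (ha : AnalyticAt 𝕜 a x) (hb : AnalyticAt 𝕜 b x) (hc : AnalyticAt 𝕜 c x)
    (hd : AnalyticAt 𝕜 d x) (he : AnalyticAt 𝕜 e x) (he0 : e x ≠ 0)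
    (hf : ∀ᶠ z in 𝓝[≠] x, f z = e z / (z - x)) (hb0 : b x = 0) :
    ∃ G : 𝕜 → 𝕜, AnalyticAt 𝕜 G x ∧
      (fun z => a z + f z * b z + (f z)⁻¹ * c z + d z) =ᶠ[𝓝[≠] x] G := by
  refine ⟨fun z => a z + e z * dslope b x z + (z - x) / e z * c z + d z, ?_, ?_⟩
  · have : AnalyticAt 𝕜 (fun z => (z - x) / e z) x := by fun_prop (disch := assumption)
    exact ((ha.add (he.mul hb.dslope)).add (this.mul hc)).add hd
  · filter_upwards [mul_eventuallyEq_mul_dslope_of_eventuallyEq_div hf hb0,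
      inv_eventuallyEq_div_of_eventuallyEq_div hf] with z hfb hfinv
    rw [hfb, hfinv]

lemma exists_meromorphicAt_and_order_nonneg_of_eventuallyEq {F G : 𝕜 → 𝕜}
    (hG : AnalyticAt 𝕜 G x) (h : F =ᶠ[𝓝[≠] x] G) :
    ∃ _ : MeromorphicAt F x, 0 ≤ meromorphicOrderAt F x :=
  ⟨hG.meromorphicAt.congr h.symm, meromorphicOrderAt_congr h ▸ hG.meromorphicOrderAt_nonneg⟩

end RemovableSingularity

lemma analyticAt_mul_mul_apply {𝕜 : Type*} [NontriviallyNormedField 𝕜] {x : 𝕜}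
    {l m n o : Type*} [Fintype m] [Fintype n] {A : 𝕜 → Matrix m n 𝕜}
    (hA : ∀ i j, AnalyticAt 𝕜 (fun z => A z i j) x) (M : Matrix l m 𝕜) (N : Matrix n o 𝕜)
    (i : l) (j : o) : AnalyticAt 𝕜 (fun z => (M * A z * N) i j) x := by
  simp only [mul_apply]
  fun_prop

lemma Matrix.mul_mul_one_sub_eq_zero_of_conjTranspose_mul_eq_smul {n α : Type*} [Fintype n]
    [DecidableEq n] [CommRing α] [StarRing α] {P A : Matrix n n α} (hP : IsIdempotentElem P)
    (hPh : Pᴴ = P) {c : α} (h : Aᴴ * P = c • P) : P * A * (1 - P) = 0 := by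
  have hPA : P * A = star c • P := by
    simpa [conjTranspose_mul, hPh] using congrArg conjTranspose h
  rw [hPA, smul_mul_assoc, hP.mul_one_sub_self, smul_zero]

theorem stmt18_general (lam0 : ℂ) (A : ℂ → Matrix (Fin 2) (Fin 2) ℂ)
    (hA : ∀ i j, AnalyticAt ℂ (fun lam => A lam i j) lam0)
    (f s : ℂ → ℂ) (hs : ∀ lam, s lam ^ 2 = f lam)
    (e : ℂ → ℂ) (he : AnalyticAt ℂ e lam0) (he0 : e lam0 ≠ 0)
    (hf : ∀ᶠ lam in nhdsWithin lam0 {lam0}ᶜ, f lam = e lam / (lam - lam0))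
    (Pm : Matrix (Fin 2) (Fin 2) ℂ)
    (hP1 : Pm * Pm = Pm) (hP2 : Pmᴴ = Pm)
    (c : ℂ) (heig : (A lam0)ᴴ * Pm = c • Pm)
    (g : ℂ → Matrix (Fin 2) (Fin 2) ℂ)
    (hg : g = fun lam => s lam • Pm + (s lam)⁻¹ • ((1 : Matrix (Fin 2) (Fin 2) ℂ) - Pm))
    (Y : ℂ → Matrix (Fin 2) (Fin 2) ℂ)
    (hY : Y = fun lam =>
      Pm * A lam * Pm + f lam • (Pm * A lam * ((1 : Matrix (Fin 2) (Fin 2) ℂ) - Pm)) +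
      (f lam)⁻¹ • (((1 : Matrix (Fin 2) (Fin 2) ℂ) - Pm) * A lam * Pm) +
      ((1 : Matrix (Fin 2) (Fin 2) ℂ) - Pm) * A lam *
        ((1 : Matrix (Fin 2) (Fin 2) ℂ) - Pm)) :
    (∀ lam, s lam ≠ 0 → g lam * A lam * (g lam)⁻¹ = Y lam) ∧
    Pm * A lam0 * ((1 : Matrix (Fin 2) (Fin 2) ℂ) - Pm) = 0 ∧
    (∀ i j, ∃ hm : MeromorphicAt (fun lam => Y lam i j) lam0,
      ((0 : ℤ) : WithTop ℤ) ≤ meromorphicOrderAt (fun lam => Y lam i j) lam0) := by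
  have hcancel := mul_mul_one_sub_eq_zero_of_conjTranspose_mul_eq_smul hP1 hP2 heig
  subst hg hY
  refine ⟨fun lam hs0 => ?_, hcancel, fun i j => ?_⟩
  · change simpleFactor (s lam) Pm * A lam * (simpleFactor (s lam) Pm)⁻¹ = _
    rw [inv_eq_right_inv (simpleFactor_mul_simpleFactor_inv hs0 hP1),
      simpleFactor_mul_mul_simpleFactor_inv hs0, hs]
  · have hentry (M N : Matrix (Fin 2) (Fin 2) ℂ) := analyticAt_mul_mul_apply hA M N i j
    obtain ⟨G, hG, hYG⟩ := exists_analyticAt_eventuallyEq_of_simplePole (hentry Pm Pm)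
      (hentry Pm (1 - Pm)) (hentry (1 - Pm) Pm) (hentry (1 - Pm) (1 - Pm)) he he0 hf
      (congrFun (congrFun hcancel i) j)
    exact exists_meromorphicAt_and_order_nonneg_of_eventuallyEq hG
      (.trans (.of_forall fun _ => rfl) hYG)

/-- **Special Delaunay dressing cancellation.**  If `g = f^{1/2}π_L + f^{-1/2}π_{L⊥}` is an
unnormalized simple factor where `f` has a simple pole at `λ₀` and `L` is an eigenline of
`A(λ₀)ᴴ`, then `gAg⁻¹ = π_L A π_L + f·π_L A π_{L⊥} + f⁻¹·π_{L⊥} A π_L + π_{L⊥} A π_{L⊥}`,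
the eigenline hypothesis gives `π_L A(λ₀) π_{L⊥} = 0`, and the expression is holomorphic at
`λ₀` (meromorphic of order `≥ 0`). -/
theorem stmt18 (lam0 : ℂ) (A : ℂ → Matrix (Fin 2) (Fin 2) ℂ)
    (hA : ∀ i j, AnalyticAt ℂ (fun lam => A lam i j) lam0)
    (htr : ∀ lam, (A lam).trace = 0)
    (f s : ℂ → ℂ) (hs : ∀ lam, s lam ^ 2 = f lam)
    (e : ℂ → ℂ) (he : AnalyticAt ℂ e lam0) (he0 : e lam0 ≠ 0)
    (hf : ∀ᶠ lam in nhdsWithin lam0 {lam0}ᶜ, f lam = e lam / (lam - lam0))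
    (Pm : Matrix (Fin 2) (Fin 2) ℂ)
    (hP1 : Pm * Pm = Pm) (hP2 : Pmᴴ = Pm) (hP3 : Pm.trace = 1)
    (c : ℂ) (heig : (A lam0)ᴴ * Pm = c • Pm)
    (g : ℂ → Matrix (Fin 2) (Fin 2) ℂ)
    (hg : g = fun lam => s lam • Pm + (s lam)⁻¹ • ((1 : Matrix (Fin 2) (Fin 2) ℂ) - Pm))
    (Y : ℂ → Matrix (Fin 2) (Fin 2) ℂ)
    (hY : Y = fun lam =>
      Pm * A lam * Pm + f lam • (Pm * A lam * ((1 : Matrix (Fin 2) (Fin 2) ℂ) - Pm)) +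
      (f lam)⁻¹ • (((1 : Matrix (Fin 2) (Fin 2) ℂ) - Pm) * A lam * Pm) +
      ((1 : Matrix (Fin 2) (Fin 2) ℂ) - Pm) * A lam *
        ((1 : Matrix (Fin 2) (Fin 2) ℂ) - Pm)) :
    (∀ lam, s lam ≠ 0 → g lam * A lam * (g lam)⁻¹ = Y lam) ∧
    Pm * A lam0 * ((1 : Matrix (Fin 2) (Fin 2) ℂ) - Pm) = 0 ∧
    (∀ i j, ∃ hm : MeromorphicAt (fun lam => Y lam i j) lam0,
      ((0 : ℤ) : WithTop ℤ) ≤ meromorphicOrderAt (fun lam => Y lam i j) lam0) :=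
  stmt18_general lam0 A hA f s hs e he he0 hf Pm hP1 hP2 c heig g hg Y hY
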